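/- For n ≥ 2, R_n ≤ ∑_{p=1}^{κ_n} ∑_{n_1+⋯+n_p=n, n_i ≥ 1} R_{⌈n_1/2⌉} R_{⌈n_2/2⌉} ⋯ R_{⌈n_p/2⌉}, where κ_n = ⌈c·n/ln n⌉ and c is a constant such that every rich word of length n has UPS-factorization with at most c·n/ln n parts. -/

import Mathlib

/-
Peeling off longest palindromic suffixes factors any word into palindromes. Appending a letter
to a word creates at most one new palindromic factor, its longest palindromic suffix, and in a
rich word exactly one; so in a rich word every peeled suffix is unioccurrent, the factors are
distinct, and the factorization is a UPS-factorization. A rich word of length `n` is recovered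
from its factorization, hence from the number `p ≤ κ_n` of factors, their lengths `n_i`
(a composition of `n`) and their first halves, which are rich words of length `⌈n_i / 2⌉`.
-/

/-- A word is rich if it has exactly `length + 1` distinct palindromic factors. -/
def Rich {A : Type*} (u : List A) : Prop :=
  {v : List A | v <:+: u ∧ v.reverse = v}.ncard = u.length + 1

/-- The number of rich words of length `n` over an alphabet with `q` letters. -/
noncomputable def numRich (q n : ℕ) : ℕ :=
  {u : List (Fin q) | u.length = n ∧ Rich u}.ncard

/-- `UPSFactorization l w` : `l = [w_p, …, w_1]` is a factorization of `w` into distinct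
nonempty palindromes such that each `w_i` is the longest palindromic suffix of `w_p ⋯ w_i`. -/
def UPSFactorization {A : Type*} (l : List (List A)) (w : List A) : Prop :=
  l.flatten = w ∧ [] ∉ l ∧ l.Nodup ∧
  (∀ i : Fin l.length, (l.get i).reverse = l.get i) ∧
  ∀ i : Fin l.length, ∀ v : List A,
    v <:+ (l.take (i + 1)).flatten → v.reverse = v → v.length ≤ (l.get i).length

section Palindrome
variable {α : Type*}

theorem eq_take_append_reverse_take_of_reverse_eq {v : List α} (hv : v.reverse = v) :
    v = v.take ((v.length + 1) / 2) ++ (v.take (v.length / 2)).reverse := by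
  have hdrop : v.drop ((v.length + 1) / 2) = (v.take (v.length / 2)).reverse := by
    rw [List.reverse_take, hv]
    congr 1
    omega
  rw [← hdrop, List.take_append_drop]

theorem eq_of_reverse_eq_of_take_eq {v w : List α} (hv : v.reverse = v) (hw : w.reverse = w)
    (hlen : v.length = w.length)
    (htake : v.take ((v.length + 1) / 2) = w.take ((w.length + 1) / 2)) : v = w := by
  have hhalf : v.take (v.length / 2) = w.take (w.length / 2) := by
    have := congrArg (List.take (v.length / 2)) htake
    rw [← hlen]
    rwa [List.take_take, List.take_take, min_eq_left (by omega), min_eq_left (by omega)] at this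
  rw [eq_take_append_reverse_take_of_reverse_eq hv, eq_take_append_reverse_take_of_reverse_eq hw,
    htake, hhalf]

theorem infix_dropLast_of_palindromic_suffixes {s v w : List α} (hs : s <:+ w)
    (hsp : s.reverse = s) (hv : v <:+ w) (hvp : v.reverse = v) (hlt : s.length < v.length) :
    s <:+: w.dropLast := by
  -- a palindromic suffix of the palindrome `v` is also a prefix of it
  have hsv : s <+: v := by
    rw [← hsp, ← hvp, List.reverse_prefix]
    exact List.suffix_of_suffix_length_le hs hv hlt.le
  have hsv' : s <+: v.dropLast :=
    List.prefix_of_prefix_length_le hsv (List.dropLast_prefix v) (by simp; omega)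
  obtain ⟨u, rfl⟩ := hv
  rw [List.dropLast_append_of_ne_nil (List.ne_nil_of_length_pos (by omega))]
  exact hsv'.isInfix.trans (List.suffix_append u _).isInfix

theorem exists_longest_palindromic_suffix (w : List α) :
    ∃ v, v <:+ w ∧ v.reverse = v ∧ ∀ s, s <:+ w → s.reverse = s → s.length ≤ v.length := by
  classical
  obtain ⟨v, hv, hmax⟩ := (w.tails.toFinset.filter fun s => s.reverse = s).exists_max_image
    List.length ⟨[], by simp⟩
  simp only [Finset.mem_filter, List.mem_toFinset, List.mem_tails] at hv hmax
  exact ⟨v, hv.1, hv.2, fun s hs hsp => hmax s ⟨hs, hsp⟩⟩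

end Palindrome

section PalFactors
variable {α : Type*}

def palFactors (u : List α) : Set (List α) := {v | v <:+: u ∧ v.reverse = v}

theorem rich_iff (u : List α) : Rich u ↔ (palFactors u).ncard = u.length + 1 := Iff.rfl

theorem palFactors_finite (u : List α) : (palFactors u).Finite :=
  u.sublists.finite_toSet.subset fun _ hv => List.mem_sublists.2 hv.1.sublist

theorem palFactors_mono {u w : List α} (h : u <:+: w) : palFactors u ⊆ palFactors w :=
  fun _ hv => ⟨hv.1.trans h, hv.2⟩

theorem palFactors_nil : palFactors ([] : List α) = {[]} := by
  ext v
  simp +contextual [palFactors]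

theorem palFactors_reverse (u : List α) : palFactors u.reverse = palFactors u := by
  ext v
  refine and_congr_left fun hv => ?_
  rw [← List.reverse_infix, List.reverse_reverse, hv]

theorem suffix_of_mem_palFactors_sdiff_dropLast {s w : List α}
    (hs : s ∈ palFactors w \ palFactors w.dropLast) : s <:+ w := by
  obtain ⟨⟨hsw, hsp⟩, hnew⟩ := hs
  rcases List.eq_nil_or_concat' w with rfl | ⟨u, a, rfl⟩
  · exact (hnew ⟨hsw, hsp⟩).elim
  · rw [List.dropLast_concat] at hnew
    exact (List.infix_concat_iff.1 hsw).resolve_right fun h => hnew ⟨h, hsp⟩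

theorem eq_of_mem_palFactors_sdiff_dropLast {s v w : List α}
    (hs : s ∈ palFactors w \ palFactors w.dropLast) (hv : v <:+ w) (hvp : v.reverse = v)
    (hle : s.length ≤ v.length) : s = v := by
  have hsuf := suffix_of_mem_palFactors_sdiff_dropLast hs
  rcases hle.lt_or_eq with hlt | heq
  · exact (hs.2 ⟨infix_dropLast_of_palindromic_suffixes hsuf hs.1.2 hv hvp hlt, hs.1.2⟩).elim
  · exact (List.suffix_of_suffix_length_le hsuf hv hle).eq_of_length heq

theorem ncard_palFactors_le_dropLast_add_one (w : List α) :
    (palFactors w).ncard ≤ (palFactors w.dropLast).ncard + 1 := by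
  have hnew : (palFactors w \ palFactors w.dropLast).ncard ≤ 1 := by
    refine (Set.ncard_le_one (palFactors_finite w).sdiff).2 fun s hs t ht => ?_
    rcases le_total s.length t.length with h | h
    · exact eq_of_mem_palFactors_sdiff_dropLast hs (suffix_of_mem_palFactors_sdiff_dropLast ht)
        ht.1.2 h
    · exact (eq_of_mem_palFactors_sdiff_dropLast ht (suffix_of_mem_palFactors_sdiff_dropLast hs)
        hs.1.2 h).symm
  have := Set.ncard_le_ncard_sdiff_add_ncard (palFactors w) (palFactors w.dropLast)
    (palFactors_finite _)
  omega

theorem ncard_palFactors_append_le (u v : List α) :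
    (palFactors (u ++ v)).ncard ≤ (palFactors u).ncard + v.length := by
  induction v using List.reverseRecOn with
  | nil => simp
  | append_singleton v a ih =>
    have := ncard_palFactors_le_dropLast_add_one (u ++ (v ++ [a]))
    rw [← List.append_assoc, List.dropLast_concat] at this
    simp only [List.length_append, List.length_singleton, ← List.append_assoc]
    omega

theorem ncard_palFactors_le (u : List α) : (palFactors u).ncard ≤ u.length + 1 := by
  simpa [palFactors_nil, add_comm] using ncard_palFactors_append_le [] u

theorem Rich.of_prefix {u w : List α} (hw : Rich w) (h : u <+: w) : Rich u := by
  obtain ⟨v, rfl⟩ := h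
  have h₁ := ncard_palFactors_append_le u v
  have h₂ := ncard_palFactors_le u
  rw [rich_iff, List.length_append] at *
  omega

theorem Rich.reverse {w : List α} (hw : Rich w) : Rich w.reverse := by
  rwa [rich_iff, palFactors_reverse, List.length_reverse]

theorem Rich.of_infix {u w : List α} (hw : Rich w) (h : u <:+: w) : Rich u := by
  obtain ⟨s, t, rfl⟩ := h
  have : Rich (u.reverse ++ s.reverse) := by
    simpa using (hw.of_prefix (List.prefix_append (s ++ u) t)).reverse
  simpa using (this.of_prefix (List.prefix_append _ _)).reverse

theorem Rich.longest_palindromic_suffix_notMem_palFactors_dropLast {v w : List α} (hw : Rich w)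
    (hne : w ≠ []) (hv : v <:+ w) (hvp : v.reverse = v)
    (hmax : ∀ s, s <:+ w → s.reverse = s → s.length ≤ v.length) :
    v ∉ palFactors w.dropLast := by
  -- richness forces a palindrome that is new at the last letter, and only `v` can be one
  have hlt : (palFactors w.dropLast).ncard < (palFactors w).ncard := by
    have := ncard_palFactors_le w.dropLast
    rw [rich_iff] at hw
    have := List.length_pos_iff.2 hne
    rw [List.length_dropLast] at *
    omega
  obtain ⟨s, hs, hsnew⟩ := Set.exists_mem_notMem_of_ncard_lt_ncard hlt (palFactors_finite _)
  have hsuf := suffix_of_mem_palFactors_sdiff_dropLast ⟨hs, hsnew⟩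
  rwa [← eq_of_mem_palFactors_sdiff_dropLast ⟨hs, hsnew⟩ hv hvp (hmax s hsuf hs.2)]

end PalFactors

section UPS
variable {α : Type*}

theorem UPSFactorization.append_singleton {l : List (List α)} {w v : List α}
    (hl : UPSFactorization l w) (hv : v ≠ []) (hvl : v ∉ l) (hvp : v.reverse = v)
    (hmax : ∀ s, s <:+ w ++ v → s.reverse = s → s.length ≤ v.length) :
    UPSFactorization (l ++ [v]) (w ++ v) := by
  obtain ⟨hflat, hnil, hnodup, hpal, hlong⟩ := hl
  refine ⟨by simp [hflat], by simp [hnil, hv.symm], ?_, fun i => ?_, fun i s hs hsp => ?_⟩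
  · exact hnodup.append (List.nodup_singleton v) (by simpa using hvl)
  all_goals
    rcases Nat.lt_succ_iff_lt_or_eq.1 (by simpa using i.isLt : (i : ℕ) < l.length + 1)
      with hi | hi
  · simpa [List.getElem_append_left hi] using hpal ⟨i, hi⟩
  · simpa [hi] using hvp
  · have := hlong ⟨i, hi⟩ s
    simp_all [List.take_append_of_le_length hi]
  · have htake : (l ++ [v]).take ((i : ℕ) + 1) = l ++ [v] := List.take_of_length_le (by simp [hi])
    rw [htake, List.flatten_append, hflat, List.flatten_singleton] at hs
    simpa [hi] using hmax s hs hsp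

theorem UPSFactorization.length_pos {l : List (List α)} {w : List α}
    (hl : UPSFactorization l w) (hw : w ≠ []) : 0 < l.length := by
  refine List.length_pos_iff.2 fun h => hw ?_
  rw [← hl.1, h, List.flatten_nil]

theorem UPSFactorization.reverse_eq_of_mem {l : List (List α)} {w v : List α}
    (hl : UPSFactorization l w) (hv : v ∈ l) : v.reverse = v := by
  obtain ⟨i, rfl⟩ := List.get_of_mem hv
  exact hl.2.2.2.1 i

theorem UPSFactorization.rich_of_mem {l : List (List α)} {w v : List α}
    (hl : UPSFactorization l w) (hw : Rich w) (hv : v ∈ l) : Rich v :=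
  hw.of_infix (hl.1 ▸ List.infix_of_mem_flatten hv)

theorem Rich.exists_upsFactorization {w : List α} (hw : Rich w) : ∃ l, UPSFactorization l w := by
  rcases eq_or_ne w [] with rfl | hne
  · exact ⟨[], by simp [UPSFactorization]⟩
  obtain ⟨v, ⟨u, rfl⟩, hvp, hmax⟩ := exists_longest_palindromic_suffix w
  have hv : v ≠ [] := by
    have := hmax _ ⟨_, List.dropLast_append_getLast hne⟩ rfl
    exact List.ne_nil_of_length_pos this
  obtain ⟨l, hl⟩ := (hw.of_prefix (List.prefix_append u v)).exists_upsFactorization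
  refine ⟨l ++ [v], hl.append_singleton hv (fun hvl => ?_) hvp hmax⟩
  refine hw.longest_palindromic_suffix_notMem_palFactors_dropLast hne (List.suffix_append u v) hvp
    hmax (palFactors_mono ?_ ⟨hl.1 ▸ List.infix_of_mem_flatten hvl, hvp⟩)
  rw [List.dropLast_append_of_ne_nil hv]
  exact (List.prefix_append _ _).isInfix
termination_by w.length
decreasing_by subst_vars; simpa using List.length_pos_iff.2 hv

end UPS

section Counting
variable {α : Type*}

def factorLengths (p : ℕ) (l : List (List α)) : Fin p → ℕ := fun i => (l.getD i []).length

theorem card_filter_factorLengths_eq_le (T : Finset (List (List α))) (P : ℕ → Finset (List α))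
    {p : ℕ} (f : Fin p → ℕ)
    (hT : ∀ l ∈ T, ∀ v ∈ l, v.reverse = v ∧ v.take ((v.length + 1) / 2) ∈ P ((v.length + 1) / 2)) :
    {l ∈ T.filter (·.length = p) | factorLengths p l = f}.card ≤ ∏ i, (P ((f i + 1) / 2)).card := by
  rw [← Fintype.card_piFinset]
  refine Finset.card_le_card_of_injOn
    (fun l i => (l.getD i []).take (((l.getD i []).length + 1) / 2)) ?_ ?_
  · rintro l hl
    simp only [Finset.coe_filter, Finset.mem_filter, Set.mem_ofPred_eq] at hl
    obtain ⟨⟨hlT, rfl⟩, rfl⟩ := hl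
    simp only [Finset.mem_coe, Fintype.mem_piFinset]
    intro i
    exact (hT l hlT _ (by simp [List.getD_eq_getElem?_getD, List.getElem_mem])).2
  · rintro l hl l' hl' h
    simp only [Finset.coe_filter, Finset.mem_filter, Set.mem_ofPred_eq] at hl hl'
    obtain ⟨⟨hlT, rfl⟩, hlf⟩ := hl
    obtain ⟨⟨hl'T, hl'p⟩, hl'f⟩ := hl'
    refine List.ext_getElem hl'p.symm fun k hk hk' => ?_
    have hhalf := congrFun h ⟨k, hk⟩
    have hlen := congrFun (hlf.trans hl'f.symm) ⟨k, hk⟩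
    simp only [factorLengths, List.getD_eq_getElem?_getD, List.getElem?_eq_getElem hk,
      List.getElem?_eq_getElem hk', Option.getD_some] at hhalf hlen
    exact eq_of_reverse_eq_of_take_eq (hT l hlT _ (List.getElem_mem hk)).1
      (hT l' hl'T _ (List.getElem_mem hk')).1 hlen hhalf

theorem card_le_sum_prod_card_take_half (T : Finset (List (List α))) (P : ℕ → Finset (List α))
    {n κ : ℕ} (hT : ∀ l ∈ T, l.length ∈ Finset.Icc 1 κ ∧ l.flatten.length = n ∧
      ∀ v ∈ l, v ≠ [] ∧ v.reverse = v ∧ v.take ((v.length + 1) / 2) ∈ P ((v.length + 1) / 2)) :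
    T.card ≤ ∑ p ∈ Finset.Icc 1 κ,
      ∑ f ∈ (Finset.Nat.antidiagonalTuple p n).filter (fun f => ∀ i, 1 ≤ f i),
        ∏ i, (P ((f i + 1) / 2)).card := by
  rw [Finset.card_eq_sum_card_fiberwise fun l hl => (hT l hl).1]
  gcongr with p
  rw [Finset.card_eq_sum_card_fiberwise (f := factorLengths p) ?_]
  · gcongr with f
    exact card_filter_factorLengths_eq_le T P f fun l hl v hv => ((hT l hl).2.2 v hv).2
  · intro l hl
    obtain ⟨hlT, rfl⟩ := Finset.mem_filter.1 hl
    obtain ⟨-, hflat, hfactors⟩ := hT l hlT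
    simp only [Finset.coe_filter, Finset.Nat.mem_antidiagonalTuple]
    refine ⟨?_, fun i => ?_⟩
    · simp [factorLengths, List.getD_eq_getElem?_getD, ← hflat, List.length_flatten]
    · simpa [factorLengths, List.getD_eq_getElem?_getD, Nat.one_le_iff_ne_zero] using
        (hfactors _ (List.getElem_mem i.isLt)).1

end Counting

theorem finite_setOf_length_eq_rich (α : Type*) [Finite α] (m : ℕ) :
    {u : List α | u.length = m ∧ Rich u}.Finite :=
  (List.finite_length_eq α m).subset fun _ hu => hu.1

noncomputable def richWords (α : Type*) [Finite α] (m : ℕ) : Finset (List α) :=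
  (finite_setOf_length_eq_rich α m).toFinset

theorem mem_richWords {α : Type*} [Finite α] {m : ℕ} {u : List α} :
    u ∈ richWords α m ↔ u.length = m ∧ Rich u :=
  Set.Finite.mem_toFinset _

theorem card_richWords (q m : ℕ) : (richWords (Fin q) m).card = numRich q m :=
  (Set.ncard_eq_toFinset_card _ _).symm

theorem numRich_recursive_bound_general (q : ℕ) (c : ℝ)
    (hUPS : ∀ w : List (Fin q), Rich w → 2 ≤ w.length →
      ∀ l : List (List (Fin q)), UPSFactorization l w →
        (l.length : ℝ) ≤ c * w.length / Real.log w.length)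
    (n : ℕ) (hn : 2 ≤ n) :
    numRich q n ≤ ∑ p ∈ Finset.Icc 1 ⌈c * n / Real.log n⌉₊,
      ∑ f ∈ (Finset.Nat.antidiagonalTuple p n).filter (fun f => ∀ i, 1 ≤ f i),
        ∏ i, numRich q ((f i + 1) / 2) := by
  classical
  choose! fac hfac using fun w (hw : w ∈ richWords (Fin q) n) =>
    (mem_richWords.1 hw).2.exists_upsFactorization
  simp only [← card_richWords]
  calc (richWords (Fin q) n).card = ((richWords (Fin q) n).image fac).card :=
        (Finset.card_image_of_injOn fun w hw w' hw' h => by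
          rw [← (hfac w hw).1, ← (hfac w' hw').1, h]).symm
    _ ≤ _ := card_le_sum_prod_card_take_half _ _ fun _ hl => ?_
  obtain ⟨w, hw, rfl⟩ := Finset.mem_image.1 hl
  obtain ⟨hwlen, hwrich⟩ := mem_richWords.1 hw
  have hups := hfac w hw
  have hp : (fac w).length ≤ ⌈c * n / Real.log n⌉₊ := by
    have := hUPS w hwrich (hwlen ▸ hn) _ hups
    rw [hwlen] at this
    exact_mod_cast this.trans (Nat.le_ceil _)
  have hne : w ≠ [] := List.ne_nil_of_length_pos (by omega)
  refine ⟨Finset.mem_Icc.2 ⟨hups.length_pos hne, hp⟩, by rw [hups.1, hwlen], fun v hv => ?_⟩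
  refine ⟨fun h => hups.2.1 (h ▸ hv), hups.reverse_eq_of_mem hv, mem_richWords.2 ⟨?_, ?_⟩⟩
  · simp only [List.length_take]
    omega
  · exact (hups.rich_of_mem hwrich hv).of_prefix (List.take_prefix _ _)

theorem numRich_recursive_bound (q : ℕ) (hq : 2 ≤ q) (c : ℝ) (hc : 1 < c)
    (hUPS : ∀ w : List (Fin q), Rich w → 2 ≤ w.length →
      ∀ l : List (List (Fin q)), UPSFactorization l w →
        (l.length : ℝ) ≤ c * w.length / Real.log w.length)
    (n : ℕ) (hn : 2 ≤ n) :
    numRich q n ≤ ∑ p ∈ Finset.Icc 1 ⌈c * n / Real.log n⌉₊,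
      ∑ f ∈ (Finset.Nat.antidiagonalTuple p n).filter (fun f => ∀ i, 1 ≤ f i),
        ∏ i, numRich q ((f i + 1) / 2) :=
  numRich_recursive_bound_general q c hUPS n hn
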